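/- Suppose d, e are positive integers, d is not a perfect square, and x = f_m·e + f_{m-1}, y = f_m satisfy x² - d·y² = (-1)^{m+1}. Then f_m divides 2·f_{m-1}·e + f_{m-2} and d = e² + (2·f_{m-1}·e + f_{m-2})/f_m. -/
import Mathlib


def fseq (k : ℤ) : ℕ → ℤ
  | 0 => 1
  | 1 => 0
  | (n+2) => k * fseq k (n+1) + fseq k n

lemma fseq_nonneg (k : ℤ) (hk : 0 < k) : ∀ n, 0 ≤ fseq k n
  | 0 => by simp [fseq]
  | 1 => by simp [fseq]
  | (n+2) => by
    have h1 := fseq_nonneg k hk n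
    have h2 := fseq_nonneg k hk (n+1)
    simp only [fseq]
    positivity

lemma fseq_pos (k : ℤ) (hk : 0 < k) : ∀ n, 0 < fseq k (n + 2)
  | 0 => by simp [fseq]
  | 1 => by simpa [fseq] using hk
  | (n+2) => by
    have h1 := fseq_pos k hk n
    have h2 := fseq_nonneg k hk (n+1)
    show 0 < k * fseq k (n+2+1) + fseq k (n+2)
    have h3 : 0 < fseq k (n+2+1) := fseq_pos k hk (n+1)
    nlinarith

lemma fseq_cassini (k : ℤ) : ∀ n : ℕ,
    fseq k (n + 1) ^ 2 - fseq k (n + 2) * fseq k n = (-1) ^ (n + 1)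
  | 0 => by simp [fseq]
  | (n+1) => by
    have ih := fseq_cassini k n
    have h : fseq k (n + 3) = k * fseq k (n + 2) + fseq k (n + 1) := rfl
    have h2 : fseq k (n + 2) = k * fseq k (n + 1) + fseq k n := rfl
    show fseq k (n + 2) ^ 2 - fseq k (n + 3) * fseq k (n + 1) = (-1) ^ (n + 2)
    rw [h, show ((-1 : ℤ)) ^ (n + 2) = (-1) ^ (n + 1) * (-1) by rw [pow_succ]]
    linear_combination (-1 : ℤ) * ih + fseq k (n + 2) * h2

theorem stmt_12 (k : ℤ) (hk : 0 < k) (m : ℕ) (hm : 1 ≤ m) (d e : ℤ)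
    (hd : 0 < d) (he : 0 < e) (hns : ¬ IsSquare d)
    (hsol : (fseq k (m + 2) * e + fseq k (m + 1)) ^ 2 - d * (fseq k (m + 2)) ^ 2 =
      (-1) ^ (m + 1)) :
    fseq k (m + 2) ∣ (2 * fseq k (m + 1) * e + fseq k m) ∧
      d = e ^ 2 + (2 * fseq k (m + 1) * e + fseq k m) / fseq k (m + 2) := by
  set F := fseq k (m + 2) with hF
  set G := fseq k (m + 1) with hG
  set H := fseq k m with hH
  have hFpos : 0 < F := fseq_pos k hk m
  have hcas : G ^ 2 - F * H = (-1) ^ (m + 1) := fseq_cassini k m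
  have key : F * (F * e ^ 2 + (2 * G * e + H)) = F * (d * F) := by
    nlinarith [hsol, hcas]
  have key2 : F * e ^ 2 + (2 * G * e + H) = d * F :=
    mul_left_cancel₀ (ne_of_gt hFpos) key
  have hdvd : F ∣ 2 * G * e + H := ⟨d - e ^ 2, by linarith [key2]; ⟩
  refine ⟨hdvd, ?_⟩
  have : (2 * G * e + H) / F = d - e ^ 2 := by
    rw [show 2 * G * e + H = F * (d - e ^ 2) by linarith]
    exact Int.mul_ediv_cancel_left _ (ne_of_gt hFpos)
  rw [this]; ring
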